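/- arXiv:1409.5685 — 7 statements merged into one kernel-verified Lean document; each statement's English description precedes it below -/
import Mathlib

section
/- Let m be a positive integer and let a be an integer. There exists an integer n > 1 such that π(n) = (n + a)/m (equivalently, m·π(n) = n + a) if and only if a ≤ S(m). -/
/-- The k-th prime, 1-indexed: `nthPrime 1 = 2`. -/
noncomputable def nthPrime (k : ℕ) : ℕ := Nat.nth Nat.Prime (k - 1)

/-- `IsS m S` says that `S` is the maximum of `{k*m - p_k : k ≥ 1}`. -/
def IsS (m : ℕ) (S : ℤ) : Prop :=
  IsGreatest {a : ℤ | ∃ k : ℕ, 0 < k ∧ a = (k : ℤ) * m - nthPrime k} S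

lemma pc_eq_count (n : ℕ) : Nat.primeCounting n = Nat.count Nat.Prime (n + 1) := rfl

lemma pc_succ (n : ℕ) :
    Nat.primeCounting (n + 1)
      = Nat.primeCounting n + (if Nat.Prime (n + 1) then 1 else 0) := by
  rw [pc_eq_count, pc_eq_count, Nat.count_succ]

lemma nthPrime_two_le (k : ℕ) : 2 ≤ nthPrime k :=
  (Nat.nth_mem_of_infinite Nat.infinite_setOf_prime _).two_le

lemma pc_nthPrime {k : ℕ} (hk : 0 < k) : Nat.primeCounting (nthPrime k) = k := by
  rw [pc_eq_count, nthPrime, Nat.count_nth_succ_of_infinite Nat.infinite_setOf_prime]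
  omega

lemma pc_two : Nat.primeCounting 2 = 1 := by
  rw [pc_eq_count]
  decide

/-- For `n ≥ 2`, with `k = π(n)`, we have `k ≥ 1` and `p_k ≤ n`. -/
lemma exists_k (n : ℕ) (hn : 2 ≤ n) :
    ∃ k : ℕ, 0 < k ∧ nthPrime k ≤ n ∧ Nat.primeCounting n = k := by
  refine ⟨Nat.primeCounting n, ?_, ?_, rfl⟩
  · have := Nat.monotone_primeCounting hn
    rw [pc_two] at this
    omega
  · have hpos : 0 < Nat.primeCounting n := by
      have := Nat.monotone_primeCounting hn
      rw [pc_two] at this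
      omega
    have h : Nat.primeCounting n - 1 < Nat.count Nat.Prime (n + 1) := by
      rw [← pc_eq_count]; omega
    have := Nat.nth_lt_of_lt_count h
    rw [nthPrime]
    omega

/-- Discrete intermediate value theorem going down. -/
lemma ivt (g : ℕ → ℤ) (h : ∀ n, g n ≤ g (n + 1) + 1) (a : ℤ) :
    ∀ N n₀, n₀ ≤ N → a ≤ g n₀ → g N < a → ∃ n, n₀ ≤ n ∧ g n = a := by
  intro N
  induction N with
  | zero =>
    intro n₀ h0 ha hN
    have : n₀ = 0 := Nat.le_zero.mp h0
    subst this; omega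
  | succ N ih =>
    intro n₀ hle ha hN
    rcases Nat.lt_or_ge n₀ (N + 1) with hlt | hge
    · have hn₀N : n₀ ≤ N := by omega
      by_cases hgN : g N < a
      · exact ih n₀ hn₀N ha hgN
      · exact ⟨N, hn₀N, by have := h N; omega⟩
    · have : n₀ = N + 1 := by omega
      subst this; omega

lemma not_prime_fac {M i : ℕ} (h2 : 2 ≤ i) (hM : i ≤ M) :
    ¬ Nat.Prime (M.factorial + i) := by
  intro hp
  have hdvd : i ∣ M.factorial + i :=
    Nat.dvd_add (Nat.dvd_factorial (by omega) hM) dvd_rfl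
  have hfac : 0 < M.factorial := M.factorial_pos
  rcases (Nat.Prime.eq_one_or_self_of_dvd hp i hdvd) with h | h <;> omega

lemma pc_gap (M : ℕ) (hM : 2 ≤ M) :
    Nat.primeCounting (M.factorial + M) = Nat.primeCounting (M.factorial + 1) := by
  have key : ∀ j, j ≤ M - 1 →
      Nat.primeCounting (M.factorial + 1 + j) = Nat.primeCounting (M.factorial + 1) := by
    intro j
    induction j with
    | zero => intro _; rfl
    | succ j ih =>
      intro hj
      have h1 : M.factorial + 1 + (j + 1) = (M.factorial + 1 + j) + 1 := by ring
      rw [h1, pc_succ, ih (by omega)]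
      have h2 : M.factorial + 1 + j + 1 = M.factorial + (j + 2) := by ring
      rw [h2, if_neg (not_prime_fac (by omega) (by omega)), add_zero]
  have := key (M - 1) le_rfl
  have h3 : M.factorial + 1 + (M - 1) = M.factorial + M := by omega
  rwa [h3] at this

theorem stmt0 (m : ℕ) (hm : 0 < m) (a : ℤ) (S : ℤ) (hS : IsS m S) :
    (∃ n : ℕ, 1 < n ∧ (m : ℤ) * Nat.primeCounting n = n + a) ↔ a ≤ S := by
  -- g(n) ≤ S for all n ≥ 2
  have gle : ∀ n : ℕ, 2 ≤ n → (m : ℤ) * Nat.primeCounting n - n ≤ S := by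
    intro n hn
    obtain ⟨k, hk, hpk, hpc⟩ := exists_k n hn
    have hmem : ((k : ℤ) * m - nthPrime k) ∈
        {a : ℤ | ∃ k : ℕ, 0 < k ∧ a = (k : ℤ) * m - nthPrime k} := ⟨k, hk, rfl⟩
    have hle := hS.2 hmem
    have hpk' : (nthPrime k : ℤ) ≤ n := by exact_mod_cast hpk
    rw [hpc]
    push_cast
    nlinarith [hle]
  constructor
  · rintro ⟨n, hn, heq⟩
    obtain ⟨k, hk, hpk, hpc⟩ := exists_k n (by omega)
    have := gle n (by omega)
    omega
  · intro ha
    obtain ⟨k, hk, hSeq⟩ := hS.1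
    set n₀ := nthPrime k with hn₀
    have h2 : 2 ≤ n₀ := nthPrime_two_le k
    set g : ℕ → ℤ := fun n => (m : ℤ) * Nat.primeCounting n - n with hg
    have hstep : ∀ n, g n ≤ g (n + 1) + 1 := by
      intro n
      have hmono := Nat.monotone_primeCounting (Nat.le_succ n)
      simp only [hg]
      have : (Nat.primeCounting n : ℤ) ≤ Nat.primeCounting (n + 1) := by exact_mod_cast hmono
      push_cast
      nlinarith
    have hgn₀ : g n₀ = S := by
      simp only [hg, pc_nthPrime hk, hSeq, hn₀]
      ring
    -- choose M large
    set M : ℕ := max (max 2 n₀) ((S - a).toNat + 2) with hM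
    have hM2 : 2 ≤ M := le_trans (le_max_left 2 n₀) (le_max_left _ _)
    have hMn₀ : n₀ ≤ M := le_trans (le_max_right 2 n₀) (le_max_left _ _)
    have hMSa : (S - a).toNat + 2 ≤ M := le_max_right _ _
    have hfac : 2 ≤ M.factorial := (Nat.self_le_factorial M).trans' hM2
    have hN : g (M.factorial + M) < a := by
      have h1 : g (M.factorial + M)
          = g (M.factorial + 1) - ((M : ℤ) - 1) := by
        simp only [hg, pc_gap M hM2]
        push_cast
        ring
      have h2' : g (M.factorial + 1) ≤ S := gle _ (by omega)
      have h3 : (S - a) < (M : ℤ) - 1 := by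
        have : S - a ≤ ((S - a).toNat : ℤ) := Int.self_le_toNat _
        have : ((S - a).toNat : ℤ) + 2 ≤ (M : ℤ) := by exact_mod_cast hMSa
        omega
      omega
    obtain ⟨n, hn₀n, hgn⟩ := ivt g hstep a (M.factorial + M) n₀
      (by omega) (by omega) hN
    refine ⟨n, by omega, ?_⟩
    have : (m : ℤ) * Nat.primeCounting n - n = a := hgn
    linarith
end

section
/- For every positive integer m, (m − 1)·S(m + 1) > m·S(m). -/
lemma nth_prime_ge (n : ℕ) : n + 2 ≤ Nat.nth Nat.Prime n := by
  induction n with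
  | zero => simp
  | succ n ih =>
    have h : Nat.nth Nat.Prime n < Nat.nth Nat.Prime (n+1) :=
      (Nat.nth_lt_nth Nat.infinite_setOf_prime).2 (Nat.lt_succ_self n)
    omega

lemma lt_nthPrime {k : ℕ} (hk : 0 < k) : k < nthPrime k := by
  have := nth_prime_ge (k - 1)
  unfold nthPrime
  omega

theorem stmt3 (m : ℕ) (hm : 0 < m) (S S' : ℤ) (hS : IsS m S) (hS' : IsS (m + 1) S') :
    ((m : ℤ) - 1) * S' > (m : ℤ) * S := by
  obtain ⟨⟨k, hk, hSeq⟩, _⟩ := hS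
  have h1 : (k : ℤ) * (m + 1) - nthPrime k ≤ S' :=
    hS'.2 ⟨k, hk, by push_cast; ring⟩
  have hp : (k : ℤ) < nthPrime k := by exact_mod_cast lt_nthPrime hk
  have hm1 : (0 : ℤ) ≤ (m : ℤ) - 1 := by omega
  nlinarith [mul_le_mul_of_nonneg_left h1 hm1]
end

section
/- For every positive integer m, m^2 − m − 1 ≤ S(m); that is, there exists a positive integer k with k·m − p_k ≥ m^2 − m − 1. -/
open Nat Chebyshev
open scoped Nat.Prime

theorem Nat.primeCounting_pos {n : ℕ} (hn : 2 ≤ n) : 0 < π n :=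
  Nat.pos_of_ne_zero fun h ↦ by rw [primeCounting_eq_zero_iff] at h; omega

theorem Nat.lcmUpto_le_pow_primeCounting (n : ℕ) : lcmUpto n ≤ n ^ π n := by
  rw [lcmUpto_eq_prod_pow_log, ← primesLE_card_eq_primeCounting]
  refine Finset.prod_le_pow_card _ _ _ fun p hp ↦ pow_log_le_self p ?_
  have := two_le_of_mem_primesLE hp
  have := le_of_mem_primesLE hp
  omega

theorem Nat.two_pow_le_succ_mul_pow_primeCounting (n : ℕ) : 2 ^ n ≤ (n + 1) * n ^ π n :=
  (two_pow_le_mul_lcmUpto n).trans (Nat.mul_le_mul_left _ (lcmUpto_le_pow_primeCounting n))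

theorem Nat.two_pow_le_mul_primeCounting_two_pow_add_one (s : ℕ) :
    2 ^ s ≤ s * (π (2 ^ s) + 1) + 1 := by
  have hsucc : 2 ^ s + 1 ≤ 2 ^ (s + 1) := by
    rw [pow_succ]
    have := Nat.one_le_two_pow (n := s)
    omega
  have h := two_pow_le_succ_mul_pow_primeCounting (2 ^ s)
  rw [← pow_mul] at h
  have := h.trans (Nat.mul_le_mul_right _ hsucc)
  rw [← pow_add, Nat.pow_le_pow_iff_right (by norm_num)] at this
  linarith

theorem nthPrime_primeCounting_le {n : ℕ} (hn : 2 ≤ n) : nthPrime (π n) ≤ n := by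
  have := primeCounting_pos hn
  have : nth Nat.Prime (π n - 1) < n + 1 :=
    nth_lt_of_lt_count (show π n - 1 < π n by omega)
  rw [nthPrime]
  omega

theorem nthPrime_eq_of_count {k q : ℕ} (hq : q.Prime) (hc : count Nat.Prime q + 1 = k) :
    nthPrime k = q := by
  rw [nthPrime, ← hc, Nat.add_sub_cancel, nth_count hq]

theorem succ_pow_three_le_two_pow {n : ℕ} (hn : 11 ≤ n) : (n + 1) ^ 3 ≤ 2 ^ n := by
  induction n, hn using Nat.le_induction with
  | base => norm_num
  | succ n hn ih =>
    calc (n + 1 + 1) ^ 3 ≤ 2 * (n + 1) ^ 3 := by nlinarith [Nat.mul_le_mul hn hn]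
      _ ≤ 2 * 2 ^ n := by omega
      _ = 2 ^ (n + 1) := by ring

theorem exists_sq_sub_le_mul_sub_nthPrime_of_lt_twelve {m : ℕ} (hm : 0 < m) (hm' : m < 12) :
    ∃ k : ℕ, 0 < k ∧ (m : ℤ) ^ 2 - m - 1 ≤ (k : ℤ) * m - nthPrime k := by
  have p2 : nthPrime 2 = 3 := nthPrime_eq_of_count prime_three (by decide)
  have p4 : nthPrime 4 = 7 := nthPrime_eq_of_count prime_seven (by decide)
  have p15 : nthPrime 15 = 47 := nthPrime_eq_of_count (by norm_num) (by decide)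
  obtain hm2 | rfl | hm4 : m ≤ 2 ∨ m = 3 ∨ 4 ≤ m := by omega
  · refine ⟨2, two_pos, ?_⟩
    rw [p2]
    interval_cases m <;> norm_num
  · exact ⟨4, four_pos, by rw [p4]; norm_num⟩
  · refine ⟨15, by norm_num, ?_⟩
    have h4 : (4 : ℤ) ≤ m := by exact_mod_cast hm4
    have h11 : (m : ℤ) ≤ 11 := by exact_mod_cast Nat.le_of_lt_succ hm'
    rw [p15]
    push_cast
    nlinarith

theorem exists_sq_sub_le_mul_sub_nthPrime_of_twelve_le {m : ℕ} (hm : 12 ≤ m) :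
    ∃ k : ℕ, 0 < k ∧ (m : ℤ) ^ 2 - m - 1 ≤ (k : ℤ) * m - nthPrime k := by
  obtain ⟨s, rfl⟩ : ∃ s, m = s + 1 := ⟨m - 1, by omega⟩
  have hs : 11 ≤ s := by omega
  have hN : 2 ≤ 2 ^ s := Nat.le_self_pow (by omega) 2
  refine ⟨π (2 ^ s), primeCounting_pos hN, ?_⟩
  have hcheb := two_pow_le_mul_primeCounting_two_pow_add_one s
  have hp := nthPrime_primeCounting_le hN
  have hcube := succ_pow_three_le_two_pow hs
  generalize π (2 ^ s) = k at *
  generalize 2 ^ s = N at *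
  zify at *
  have key : (s : ℤ) * ((s + 1) ^ 2 - (s + 1) - 1) ≤ s * (k * (s + 1) - nthPrime k) := by
    nlinarith
  exact le_of_mul_le_mul_left key (by positivity)

theorem exists_sq_sub_le_mul_sub_nthPrime {m : ℕ} (hm : 0 < m) :
    ∃ k : ℕ, 0 < k ∧ (m : ℤ) ^ 2 - m - 1 ≤ (k : ℤ) * m - nthPrime k := by
  rcases lt_or_ge m 12 with hsmall | hlarge
  · exact exists_sq_sub_le_mul_sub_nthPrime_of_lt_twelve hm hsmall
  · exact exists_sq_sub_le_mul_sub_nthPrime_of_twelve_le hlarge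

theorem stmt8 (m : ℕ) (hm : 0 < m) (S : ℤ) (hS : IsS m S) :
    (m : ℤ) ^ 2 - m - 1 ≤ S ∧
      ∃ k : ℕ, 0 < k ∧ (m : ℤ) ^ 2 - m - 1 ≤ (k : ℤ) * m - nthPrime k := by
  obtain ⟨k, hk, hbound⟩ := exists_sq_sub_le_mul_sub_nthPrime hm
  exact ⟨hbound.trans (hS.2 ⟨k, hk, rfl⟩), k, hk, hbound⟩
end

section
/- For every integer m > 4, there exists a positive integer n such that π(m·n) = m + n. -/
open Nat Filter Asymptotics
open scoped Nat.Prime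

theorem Int.exists_mem_Ico_eq_of_sub_one_le {g : ℕ → ℤ} (hg : ∀ n, g n - 1 ≤ g (n + 1))
    {c : ℤ} {a b : ℕ} (hab : a ≤ b) (ha : c ≤ g a) (hb : g b < c) :
    ∃ n ∈ Finset.Ico a b, g n = c := by
  induction b, hab using Nat.le_induction with
  | base => omega
  | succ b hab ih =>
    by_cases hgb : g b < c
    · obtain ⟨n, hn, hgn⟩ := ih hgb
      exact ⟨n, Finset.Ico_subset_Ico_right (le_succ b) hn, hgn⟩
    · exact ⟨b, Finset.mem_Ico.2 ⟨hab, Nat.lt_succ_self b⟩, by linarith [hg b]⟩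

namespace Nat

theorem lcmUpto_le_pow_primeCounting_s10 (n : ℕ) : lcmUpto n ≤ n ^ π n := by
  rcases n.eq_zero_or_pos with rfl | hn
  · decide
  rw [lcmUpto_eq_prod_pow_log, ← primesLE_card_eq_primeCounting]
  exact Finset.prod_le_pow_card _ _ _ fun p _ => pow_log_le_self p hn.ne'

theorem two_pow_le_succ_pow_primeCounting_succ (n : ℕ) : 2 ^ n ≤ (n + 1) ^ (π n + 1) :=
  calc 2 ^ n ≤ (n + 1) * lcmUpto n := Chebyshev.two_pow_le_mul_lcmUpto n
    _ ≤ (n + 1) * (n + 1) ^ π n := by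
      gcongr
      exact (lcmUpto_le_pow_primeCounting_s10 n).trans (Nat.pow_le_pow_left (le_succ n) _)
    _ = (n + 1) ^ (π n + 1) := by ring

theorem two_mul_le_primeCounting_mul_self {m a : ℕ} (hma : m ≤ 2 ^ a) (ham : 4 * a + 3 ≤ m) :
    2 * m ≤ π (m * m) := by
  by_contra! h
  have hsq : m * m + 1 ≤ 2 ^ (2 * a + 1) := by
    have : m * m ≤ 2 ^ a * 2 ^ a := Nat.mul_le_mul hma hma
    have : 0 < 2 ^ a * 2 ^ a := by positivity
    have : 2 ^ (2 * a + 1) = 2 * (2 ^ a * 2 ^ a) := by ring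
    omega
  have : 2 ^ (m * m) ≤ 2 ^ ((2 * a + 1) * (2 * m)) :=
    calc 2 ^ (m * m) ≤ (m * m + 1) ^ (π (m * m) + 1) := two_pow_le_succ_pow_primeCounting_succ _
      _ ≤ (2 ^ (2 * a + 1)) ^ (2 * m) :=
        (Nat.pow_le_pow_left hsq _).trans (Nat.pow_le_pow_right (by positivity) h)
      _ = 2 ^ ((2 * a + 1) * (2 * m)) := (pow_mul _ _ _).symm
  have := (Nat.pow_le_pow_iff_right (by norm_num : 1 < 2)).1 this
  nlinarith

theorem four_mul_clog_add_three_le {m : ℕ} (hm : 23 ≤ m) : 4 * clog 2 m + 3 ≤ m := by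
  have hlt : 2 ^ (clog 2 m - 1) < m := pow_pred_clog_lt_self one_lt_two (by omega)
  obtain hsmall | ⟨b, hb⟩ : clog 2 m ≤ 5 ∨ ∃ b, clog 2 m = b + 6 :=
    (le_or_gt _ 5).imp_right fun h => ⟨clog 2 m - 6, by omega⟩
  · omega
  · rw [hb, show b + 6 - 1 = b + 5 by omega, pow_add] at hlt
    have : b < 2 ^ b := Nat.lt_two_pow_self
    omega

set_option maxRecDepth 4000 in
theorem exists_add_le_primeCounting_mul {m : ℕ} (hm : 4 < m) :
    ∃ n, 0 < n ∧ m + n ≤ π (m * n) := by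
  rcases lt_or_ge m 23 with hsmall | hlarge
  · have key : ∀ m < 23, 5 ≤ m → m + 9 ≤ π (m * 9) := by decide
    exact ⟨9, by norm_num, key m hsmall hm⟩
  · refine ⟨m, by omega, ?_⟩
    rw [← two_mul]
    exact two_mul_le_primeCounting_mul_self (le_pow_clog one_lt_two m)
      (four_mul_clog_add_three_le hlarge)

theorem primeCounting_isLittleO : (fun n : ℕ => (π n : ℝ)) =o[atTop] (fun n => (n : ℝ)) := by
  refine isLittleO_iff.2 fun c hc => ?_
  set C := Real.log 4 + 1
  have hcheb :=
    tendsto_natCast_atTop_atTop.eventually (Chebyshev.eventually_primeCounting_le one_pos)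
  have hlog :=
    (Real.tendsto_log_atTop.comp tendsto_natCast_atTop_atTop).eventually_ge_atTop (C / c)
  filter_upwards [hcheb, hlog] with n hπ hn
  simp only [floor_natCast, Function.comp_apply] at hπ hn
  have hlogpos : 0 < Real.log n := lt_of_lt_of_le (by positivity) hn
  rw [Real.norm_natCast, Real.norm_natCast]
  calc (π n : ℝ) ≤ C * n / Real.log n := hπ
    _ ≤ c * n := by
      rw [div_le_iff₀ hlogpos]
      rw [div_le_iff₀ hc] at hn
      nlinarith [(Nat.cast_nonneg n : (0 : ℝ) ≤ n)]

theorem eventually_primeCounting_mul_lt {m : ℕ} (hm : 0 < m) :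
    ∀ᶠ k in atTop, π (m * k) < k := by
  have hmR : (0 : ℝ) < m := by exact_mod_cast hm
  have hbound := (tendsto_id.const_mul_atTop' hm).eventually
    (primeCounting_isLittleO.bound (inv_pos.2 (mul_pos two_pos hmR) : (0 : ℝ) < (2 * (m : ℝ))⁻¹))
  filter_upwards [hbound, eventually_gt_atTop 0] with k hk hk0
  simp only [id, Nat.cast_mul, norm_mul, Real.norm_natCast] at hk
  have : (π (m * k) : ℝ) < k := by
    calc (π (m * k) : ℝ) ≤ (2 * (m : ℝ))⁻¹ * (m * k) := hk
      _ = k / 2 := by field_simp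
      _ < k := by linarith [(Nat.cast_pos.2 hk0 : (0 : ℝ) < k)]
  exact_mod_cast this

end Nat

theorem stmt10 (m : ℕ) (hm : 4 < m) :
    ∃ n : ℕ, 0 < n ∧ Nat.primeCounting (m * n) = m + n := by
  obtain ⟨n₀, hn₀, hlow⟩ := exists_add_le_primeCounting_mul hm
  obtain ⟨n₁, hhigh, hn₀₁⟩ :=
    ((eventually_primeCounting_mul_lt (by omega : 0 < m)).and (eventually_ge_atTop n₀)).exists
  let g : ℕ → ℤ := fun n => π (m * n) - n
  have hstep : ∀ n, g n - 1 ≤ g (n + 1) := fun n => by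
    have : π (m * n) ≤ π (m * (n + 1)) := monotone_primeCounting (by nlinarith)
    simp only [g]
    push_cast
    omega
  obtain ⟨n, hn, hgn⟩ := Int.exists_mem_Ico_eq_of_sub_one_le hstep (c := m) hn₀₁
    (by simp only [g]; omega) (by simp only [g]; omega)
  rw [Finset.mem_Ico] at hn
  exact ⟨n, by omega, by simp only [g] at hgn; omega⟩
end

section
/- For every positive integer m, there exists a positive integer n with π(m + n) = n; in fact one may take n to be the number of primes not exceeding the m-th composite number. -/
private lemma comp_infinite : {x : ℕ | 1 < x ∧ ¬ x.Prime}.Infinite := by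
  apply Set.infinite_of_not_bddAbove
  rintro ⟨b, hb⟩
  have : 2 * (b + 2) ∈ {x : ℕ | 1 < x ∧ ¬ x.Prime} :=
    ⟨by omega, Nat.not_prime_mul (by omega) (by omega)⟩
  have := hb this
  omega

private lemma count_split : ∀ N, 2 ≤ N →
    Nat.count Nat.Prime N + Nat.count (fun x => 1 < x ∧ ¬ x.Prime) N + 2 = N := by
  intro N hN
  induction N with
  | zero => omega
  | succ N ih =>
    rcases Nat.lt_or_ge N 2 with h | h
    · interval_cases N
      · omega
      · rw [Nat.count_succ, Nat.count_succ]
        simp [show ¬ Nat.Prime 1 by decide]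
        decide
    · by_cases hp : N.Prime
      · rw [Nat.count_succ, Nat.count_succ]
        simp [hp]
        omega
      · rw [Nat.count_succ, Nat.count_succ]
        simp [hp, show 1 < N by omega]
        omega

theorem stmt12 (m : ℕ) (hm : 0 < m) :
    ∃ n : ℕ, 0 < n ∧ Nat.primeCounting (m + n) = n ∧
      n = Nat.primeCounting (Nat.nth (fun x => 1 < x ∧ ¬ x.Prime) (m - 1)) := by
  obtain ⟨c, hcdef⟩ : ∃ c, Nat.nth (fun x => 1 < x ∧ ¬ x.Prime) (m - 1) = c := ⟨_, rfl⟩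
  have hcmem : 1 < c ∧ ¬ c.Prime := hcdef ▸ Nat.nth_mem_of_infinite comp_infinite (m - 1)
  have hc4 : 4 ≤ c := by
    have h2 : c ≠ 2 := fun e => hcmem.2 (e ▸ Nat.prime_two)
    have h3 : c ≠ 3 := fun e => hcmem.2 (e ▸ Nat.prime_three)
    omega
  have hcount : Nat.count (fun x => 1 < x ∧ ¬ x.Prime) c = m - 1 := by
    rw [← hcdef]; exact Nat.count_nth_of_infinite comp_infinite (m - 1)
  obtain ⟨n, hn'⟩ : ∃ n, Nat.count Nat.Prime (c + 1) = n := ⟨_, rfl⟩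
  have hnpi : Nat.primeCounting c = n := hn'
  have hcount1 : Nat.count (fun x => 1 < x ∧ ¬ x.Prime) (c + 1) = m := by
    rw [Nat.count_succ, hcount]
    simp only [hcmem.1, hcmem.2, not_false_iff, and_self, if_true]
    omega
  have hsplit := count_split (c + 1) (by omega)
  have hcsum : c = m + n + 1 := by omega
  have hnpos : 0 < n := by
    have h1 : Nat.count Nat.Prime 3 ≤ Nat.count Nat.Prime (c + 1) :=
      Nat.count_monotone _ (by omega)
    have h3 : Nat.count Nat.Prime 3 = 1 := by decide
    omega
  refine ⟨n, hnpos, ?_, by rw [hcdef, hnpi]⟩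
  have hmn : m + n = c - 1 := by omega
  have h1 : Nat.primeCounting (m + n) = Nat.count Nat.Prime c := by
    rw [hmn]
    show Nat.count Nat.Prime (c - 1 + 1) = _
    congr 1
    omega
  have h2 : Nat.count Nat.Prime (c + 1) = Nat.count Nat.Prime c := by
    rw [Nat.count_succ]
    simp [hcmem.2]
  omega
end

section
/- Let k be a nonnegative integer, let m be a positive integer, and let r be an integer with 1 − p_{k+1} ≤ r ≤ m − p_{k+1}. Then there exists an integer n ≥ p_{k+1} such that n + r = m·(π(n) − k), i.e., (n + r)/(π(n) − k) = m. -/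
/-!
Put `F n = m (π n - k) - n`. At `n = p_{k+1}` we have `π n = k + 1`, so `F n = m - p_{k+1} ≥ r`.
Since `π` is nondecreasing, `F` drops by at most one from `n` to `n + 1`, and since `π n = o(n)`
(Chebyshev), `F n` eventually falls below `1 - p_{k+1} ≤ r`. A function that decreases in steps
of at most one cannot skip the value `r`.
-/

open Nat Filter
open scoped Nat.Prime

theorem Int.exists_eq_of_sub_one_le_succ {f : ℕ → ℤ} (hf : ∀ n, f n - 1 ≤ f (n + 1))
    {a b : ℕ} {r : ℤ} (hab : a ≤ b) (ha : r ≤ f a) (hb : f b ≤ r) :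
    ∃ c, a ≤ c ∧ c ≤ b ∧ f c = r := by
  induction b, hab using Nat.le_induction with
  | base => exact ⟨a, le_rfl, le_rfl, le_antisymm hb ha⟩
  | succ b hab ih =>
    by_cases hfb : f b ≤ r
    · obtain ⟨c, hac, hcb, hc⟩ := ih hfb
      exact ⟨c, hac, hcb.trans b.le_succ, hc⟩
    · exact ⟨b + 1, hab.trans b.le_succ, le_rfl, le_antisymm hb (by linarith [hf b])⟩

theorem Nat.primeCounting_nth_prime (k : ℕ) : π (nth Prime k) = k + 1 := by
  rw [primeCounting_eq_primeCounting'_succ, primeCounting', count_succ,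
    if_pos (prime_nth_prime k), ← primeCounting', primeCounting'_nth_eq]

theorem Nat.eventually_mul_primeCounting_add_le (m C : ℕ) :
    ∀ᶠ n : ℕ in atTop, m * π n + C ≤ n := by
  set A := Real.log 4 + 1
  have hA : 0 < A := by positivity
  have hπ : ∀ᶠ n : ℕ in atTop, (π n : ℝ) ≤ A * n / Real.log n := by
    simpa using tendsto_natCast_atTop_atTop.eventually
      (Chebyshev.eventually_primeCounting_le one_pos)
  have hlog : ∀ᶠ n : ℕ in atTop, 2 * m * A + 1 ≤ Real.log n :=
    (Real.tendsto_log_atTop.comp tendsto_natCast_atTop_atTop).eventually_ge_atTop _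
  filter_upwards [hπ, hlog, eventually_ge_atTop (2 * C)] with n hπn hlogn hCn
  have hlogpos : 0 < Real.log n := by nlinarith
  have hmπ : (m * π n : ℝ) ≤ n / 2 := calc
    (m * π n : ℝ) ≤ m * (A * n / Real.log n) := by gcongr
    _ ≤ n / 2 := by
      rw [mul_div_assoc', div_le_div_iff₀ hlogpos two_pos]
      nlinarith [(n.cast_nonneg : (0 : ℝ) ≤ n)]
  have hC : (C : ℝ) ≤ n / 2 := by
    rw [le_div_iff₀ two_pos]
    exact_mod_cast (by omega : C * 2 ≤ n)
  exact_mod_cast (by linarith : (m * π n + C : ℝ) ≤ n)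

theorem stmt15_general (k m : ℕ) (r : ℤ)
    (h1 : 1 - (nthPrime (k + 1) : ℤ) ≤ r) (h2 : r ≤ (m : ℤ) - nthPrime (k + 1)) :
    ∃ n : ℕ, nthPrime (k + 1) ≤ n ∧
      (n : ℤ) + r = (m : ℤ) * ((Nat.primeCounting n : ℤ) - k) := by
  set p := nthPrime (k + 1)
  have hπp : π p = k + 1 := primeCounting_nth_prime k
  set F : ℕ → ℤ := fun n => m * ((π n : ℤ) - k) - n
  have hF : ∀ n, F n - 1 ≤ F (n + 1) := fun n => by
    have : (m * π n : ℤ) ≤ m * π (n + 1) := by gcongr; exact monotone_primeCounting n.le_succ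
    simp only [F]
    push_cast
    linarith
  obtain ⟨b, hpb, hb⟩ :=
    ((eventually_mul_primeCounting_add_le m (p + m * k)).and (eventually_ge_atTop p)).exists
  have hFp : r ≤ F p := by simp only [F, hπp]; push_cast; linarith
  have hFb : F b ≤ r := by
    have : (m * π b + (p + m * k) : ℤ) ≤ b := by exact_mod_cast hpb
    have : (0 : ℤ) ≤ m * k := by positivity
    simp only [F]
    linarith
  obtain ⟨n, hpn, -, hn⟩ := Int.exists_eq_of_sub_one_le_succ hF hb hFp hFb
  exact ⟨n, hpn, by simp only [F] at hn; linarith⟩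

theorem stmt15 (k m : ℕ) (hm : 0 < m) (r : ℤ)
    (h1 : 1 - (nthPrime (k + 1) : ℤ) ≤ r) (h2 : r ≤ (m : ℤ) - nthPrime (k + 1)) :
    ∃ n : ℕ, nthPrime (k + 1) ≤ n ∧
      (n : ℤ) + r = (m : ℤ) * ((Nat.primeCounting n : ℤ) - k) :=
  stmt15_general k m r h1 h2
end

section
/- For every integer m ≥ 2, there exists an integer n > 1 such that n = m·π(n), i.e., n/π(n) = m. -/
/-!
The map `k ↦ π(m k)` is monotone, is at least `k` at `k = 1` (as `m ≥ 2`), and falls below `k`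
for large `k` because `π(x) = o(x)` by Chebyshev's bound `π(x) ≪ x / log x`. Since a monotone map
into `ℕ` cannot jump over the diagonal, `π(m k) = k` for some `k ≥ 1`, and `n = m k` works.
-/

open Filter Asymptotics Real

theorem Chebyshev.primeCounting_floor_isLittleO_id :
    (fun x : ℝ ↦ (Nat.primeCounting ⌊x⌋₊ : ℝ)) =o[atTop] id := by
  have hbig : (fun x : ℝ ↦ (Nat.primeCounting ⌊x⌋₊ : ℝ)) =O[atTop] (fun x ↦ x / log x) := by
    refine IsBigO.of_bound (log 4 + 1) ?_
    filter_upwards [eventually_primeCounting_le one_pos, eventually_gt_atTop 1] with x hπ hx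
    rw [Real.norm_natCast, norm_of_nonneg (div_nonneg (by linarith) (log_nonneg hx.le)),
      ← mul_div_assoc]
    exact hπ
  have hsmall : (fun x : ℝ ↦ x / log x) =o[atTop] id := by
    rw [isLittleO_iff_tendsto' (Eventually.of_forall fun x hx ↦ by simp [show x = 0 from hx])]
    refine tendsto_log_atTop.inv_tendsto_atTop.congr' ?_
    filter_upwards [eventually_ne_atTop 0] with x hx
    simp [div_div_cancel_left' hx]
  exact hbig.trans_isLittleO hsmall

theorem Nat.primeCounting_isLittleO_s16 :
    (fun n : ℕ ↦ (Nat.primeCounting n : ℝ)) =o[atTop] (fun n ↦ (n : ℝ)) := by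
  simpa [Function.comp_def] using
    Chebyshev.primeCounting_floor_isLittleO_id.comp_tendsto tendsto_natCast_atTop_atTop

theorem Nat.exists_primeCounting_mul_lt {m : ℕ} (hm : 0 < m) :
    ∃ k, Nat.primeCounting (m * k) < k := by
  have hm' : (0 : ℝ) < m := by exact_mod_cast hm
  have hbound := (tendsto_id.const_mul_atTop' hm).eventually
    (Nat.primeCounting_isLittleO_s16.def (inv_pos.mpr (mul_pos two_pos hm')))
  obtain ⟨k, hk, hk1⟩ := (hbound.and (eventually_ge_atTop 1)).exists
  refine ⟨k, ?_⟩
  have hk1' : (1 : ℝ) ≤ k := by exact_mod_cast hk1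
  have hhalf : (Nat.primeCounting (m * k) : ℝ) ≤ k / 2 := by
    simpa [field] using hk
  exact_mod_cast hhalf.trans_lt (by linarith : (k : ℝ) / 2 < k)

theorem Nat.exists_eq_self_of_monotone {f : ℕ → ℕ} (hf : Monotone f) {a b : ℕ} (hab : a ≤ b)
    (ha : a ≤ f a) (hb : f b < b) : ∃ k, a ≤ k ∧ k < b ∧ f k = k := by
  induction b, hab using Nat.le_induction with
  | base => omega
  | succ b hab ih =>
    by_cases hfb : f b < b
    · obtain ⟨k, hak, hkb, hk⟩ := ih hfb
      exact ⟨k, hak, hkb.trans b.lt_succ_self, hk⟩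
    · have hstep := hf (Nat.le_add_right b 1)
      exact ⟨b, hab, b.lt_succ_self, by omega⟩

theorem stmt16 (m : ℕ) (hm : 2 ≤ m) :
    ∃ n : ℕ, 1 < n ∧ n = m * Nat.primeCounting n := by
  obtain ⟨K, hK⟩ := Nat.exists_primeCounting_mul_lt (m := m) (by omega)
  have hmono : Monotone fun k ↦ Nat.primeCounting (m * k) :=
    Nat.monotone_primeCounting.comp fun _ _ h ↦ Nat.mul_le_mul_left m h
  have hone : 1 ≤ Nat.primeCounting (m * 1) :=
    Nat.pos_of_ne_zero <| by rw [Ne, Nat.primeCounting_eq_zero_iff]; omega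
  have hK1 : 1 ≤ K := Nat.pos_of_ne_zero <| by rintro rfl; simp at hK
  obtain ⟨k, hk1, -, hk⟩ := Nat.exists_eq_self_of_monotone hmono hK1 hone hK
  exact ⟨m * k, by nlinarith, by rw [hk]⟩
end
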